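/- arXiv:2101.05594 — 5 statements merged into one kernel-verified Lean document; each statement's English description precedes it below -/
import Mathlib

section
/- Let X be a real vector space of dimension exactly 2 and let γ be a gauge on X. Then γ is a norm (i.e., additionally γ(−x) = γ(x) for all x ∈ X) if and only if every straight line K = {x + t·v : t ∈ ℝ} (with x, v ∈ X, v ≠ 0) is coproximinal in (X, γ). -/
/-- A gauge on a real vector space: nonnegative, vanishing exactly at `0`,
positively homogeneous, and subadditive. -/
def IsGauge {X : Type*} [AddCommGroup X] [Module ℝ X] (γ : X → ℝ) : Prop :=
  (∀ x, 0 ≤ γ x) ∧ (∀ x, γ x = 0 ↔ x = 0) ∧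
    (∀ (l : ℝ) (x : X), 0 < l → γ (l • x) = l * γ x) ∧
    (∀ x y, γ (x + y) ≤ γ x + γ y)

/-- `K` is coproximinal: every point of the space has a best coapproximation in `K`. -/
def Coproximinal {X : Type*} [AddCommGroup X] (γ : X → ℝ) (K : Set X) : Prop :=
  ∀ y : X, ∃ x ∈ K, ∀ z ∈ K, γ (x - z) ≤ γ (y - z)

/-!
A line `p + ℝ v` is coproximinal iff `γ v γ(-v) ≤ γ(-v) γ z + γ v γ(z - v)` for all `z`: the
admissible positions of a best coapproximation of `y` form an intersection of intervals, which is
nonempty as soon as the intervals meet pairwise. For a norm this is the triangle inequality.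

Conversely, on a line `w + ℝ d` avoiding the origin put `p t = γ (w + t d)` and
`q t = γ (-(w + t d))`. The condition gives `2 p q ≤ q p(t + δ) + p q(t - δ)`, which up to `O(δ²)`
says that the forward increments of `log p` dominate the backward increments of `log q`, and
symmetrically. Telescoping, `p / q` is constant. In dimension two any two independent vectors lie
on such a line, so `γ(-x) / γ x = γ(-w) / γ w = γ x / γ(-x)`.
-/

open Filter Topology NNReal

theorem sub_le_sub_add_of_forall_lt {F G : ℝ → ℝ} {a δ c : ℝ} (n : ℕ)
    (h : ∀ i < n, G (a + i * δ) - G (a + i * δ - δ) ≤ F (a + i * δ + δ) - F (a + i * δ) + c) :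
    G (a + n * δ - δ) - G (a - δ) ≤ F (a + n * δ) - F a + n * c := by
  induction n with
  | zero => simp
  | succ n ih =>
    have hn := h n n.lt_succ_self
    have ih := ih fun i hi => h i (hi.trans n.lt_succ_self)
    have e : a + (n + 1 : ℕ) * δ = a + n * δ + δ := by push_cast; ring
    rw [e, add_sub_cancel_right]
    push_cast
    linarith

theorem sub_le_sub_of_forall_sub_le_add_sq {F G : ℝ → ℝ} (hG : Continuous G) {a b C : ℝ}
    (hab : a ≤ b)
    (h : ∀ τ ∈ Set.Icc a b, ∀ δ ∈ Set.Ioc (0 : ℝ) 1,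
      G τ - G (τ - δ) ≤ F (τ + δ) - F τ + C * δ ^ 2) :
    G b - G a ≤ F b - F a := by
  rcases hab.eq_or_lt with rfl | hab
  · simp
  have hstep : ∀ n : ℕ, 0 < n → (b - a) / n ≤ 1 →
      G (b - (b - a) / n) - G (a - (b - a) / n) ≤ F b - F a + C * (b - a) ^ 2 / n := by
    intro n hn hδ1
    set δ := (b - a) / n with hδ
    have hδ0 : 0 < δ := by positivity
    have hend : a + n * δ = b := by rw [hδ]; field_simp; ring
    have hC : C * (b - a) ^ 2 / n = n * (C * δ ^ 2) := by rw [hδ]; field_simp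
    rw [hC, ← hend]
    refine sub_le_sub_add_of_forall_lt n fun i hi => h _ ⟨?_, ?_⟩ δ ⟨hδ0, hδ1⟩
    · have : (0 : ℝ) ≤ i * δ := by positivity
      linarith
    · have : (i : ℝ) ≤ n := by exact_mod_cast hi.le
      nlinarith
  have hδ : Tendsto (fun n : ℕ => (b - a) / n) atTop (𝓝 0) :=
    tendsto_const_div_atTop_nhds_zero_nat _
  have hG' : ∀ x, Tendsto (fun n : ℕ => G (x - (b - a) / n)) atTop (𝓝 (G x)) := fun x => by
    have := (tendsto_const_nhds (x := x)).sub hδ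
    rw [sub_zero] at this
    exact (hG.tendsto x).comp this
  have hrhs : Tendsto (fun n : ℕ => F b - F a + C * (b - a) ^ 2 / n) atTop
      (𝓝 (F b - F a)) := by
    simpa using tendsto_const_nhds.add (tendsto_const_div_atTop_nhds_zero_nat (C * (b - a) ^ 2))
  refine le_of_tendsto_of_tendsto ((hG' b).sub (hG' a)) hrhs ?_
  filter_upwards [eventually_gt_atTop 0, hδ.eventually (gt_mem_nhds one_pos)] with n hn hn1
  exact hstep n hn hn1.le

theorem neg_le_log_add_log_of_two_le_add {x y : ℝ} (hx : 0 < x) (hy : 0 < y) (hxy : 2 ≤ x + y) :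
    -((x - 1) ^ 2 / x + (y - 1) ^ 2 / y) ≤ Real.log x + Real.log y := by
  have hx' := Real.one_sub_inv_le_log_of_pos hx
  have hy' := Real.one_sub_inv_le_log_of_pos hy
  have ex : 1 - x⁻¹ = (x - 1) - (x - 1) ^ 2 / x := by field_simp; ring
  have ey : 1 - y⁻¹ = (y - 1) - (y - 1) ^ 2 / y := by field_simp; ring
  linarith

theorem sq_div_sub_one_div_le {K m u v δ : ℝ} (hm : 0 < m) (hu : m ≤ u) (hv : m ≤ v)
    (huv : |v - u| ≤ K * δ) : (v / u - 1) ^ 2 / (v / u) ≤ (K * δ / m) ^ 2 := by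
  have hu0 : 0 < u := hm.trans_le hu
  have hv0 : 0 < v := hm.trans_le hv
  have e : (v / u - 1) ^ 2 / (v / u) = (v - u) ^ 2 / (u * v) := by field_simp
  rw [e, div_pow]
  exact div_le_div₀ (sq_nonneg _) (sq_le_sq' (abs_le.1 huv).1 (abs_le.1 huv).2) (by positivity)
    (by nlinarith)

theorem log_sub_log_le_log_sub_log_add_sq {p₀ p₁ q₀ q₁ m Kp Kq δ : ℝ} (hm : 0 < m)
    (hp₀ : m ≤ p₀) (hp₁ : m ≤ p₁) (hq₀ : m ≤ q₀) (hq₁ : m ≤ q₁)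
    (hp : |p₁ - p₀| ≤ Kp * δ) (hq : |q₁ - q₀| ≤ Kq * δ)
    (h : 2 * (p₀ * q₀) ≤ q₀ * p₁ + p₀ * q₁) :
    Real.log q₀ - Real.log q₁ ≤
      Real.log p₁ - Real.log p₀ + ((Kp / m) ^ 2 + (Kq / m) ^ 2) * δ ^ 2 := by
  have hp₀' := hm.trans_le hp₀
  have hq₀' := hm.trans_le hq₀
  have hsum : 2 ≤ p₁ / p₀ + q₁ / q₀ := by
    rw [div_add_div _ _ hp₀'.ne' hq₀'.ne', le_div_iff₀ (mul_pos hp₀' hq₀')]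
    linarith
  have hlog := neg_le_log_add_log_of_two_le_add (div_pos (hm.trans_le hp₁) hp₀')
    (div_pos (hm.trans_le hq₁) hq₀') hsum
  rw [Real.log_div (hm.trans_le hp₁).ne' hp₀'.ne', Real.log_div (hm.trans_le hq₁).ne' hq₀'.ne']
    at hlog
  have hbp := sq_div_sub_one_div_le hm hp₀ hp₁ hp
  have hbq := sq_div_sub_one_div_le hm hq₀ hq₁ hq
  have ep : (Kp * δ / m) ^ 2 = (Kp / m) ^ 2 * δ ^ 2 := by ring
  have eq : (Kq * δ / m) ^ 2 = (Kq / m) ^ 2 * δ ^ 2 := by ring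
  linarith

theorem monotone_div_of_two_mul_le {p q : ℝ → ℝ} {Kp Kq : ℝ≥0} (hp : LipschitzWith Kp p)
    (hq : LipschitzWith Kq q) (hp0 : ∀ t, 0 < p t) (hq0 : ∀ t, 0 < q t)
    (h : ∀ t δ, 2 * (p t * q t) ≤ q t * p (t + δ) + p t * q (t - δ)) :
    Monotone fun t => p t / q t := by
  intro a b hab
  obtain ⟨t₀, -, ht₀⟩ := (isCompact_Icc (a := a - 1) (b := b + 1)).exists_isMinOn
    (Set.nonempty_Icc.2 (by linarith)) (hp.continuous.min hq.continuous).continuousOn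
  set m := min (p t₀) (q t₀)
  have hmp : ∀ t ∈ Set.Icc (a - 1) (b + 1), m ≤ p t := fun t ht =>
    (ht₀ ht).trans (min_le_left ..)
  have hmq : ∀ t ∈ Set.Icc (a - 1) (b + 1), m ≤ q t := fun t ht =>
    (ht₀ ht).trans (min_le_right ..)
  have hlog : Real.log (q b) - Real.log (q a) ≤ Real.log (p b) - Real.log (p a) := by
    refine sub_le_sub_of_forall_sub_le_add_sq (F := fun t => Real.log (p t))
      (C := (Kp / m) ^ 2 + (Kq / m) ^ 2) (hq.continuous.log fun t => (hq0 t).ne') hab ?_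
    rintro τ ⟨haτ, hτb⟩ δ ⟨hδ0, hδ1⟩
    refine log_sub_log_le_log_sub_log_add_sq (lt_min (hp0 t₀) (hq0 t₀))
      (hmp τ ⟨by linarith, by linarith⟩) (hmp (τ + δ) ⟨by linarith, by linarith⟩)
      (hmq τ ⟨by linarith, by linarith⟩) (hmq (τ - δ) ⟨by linarith, by linarith⟩)
      ?_ ?_ (h τ δ)
    · simpa [Real.dist_eq, abs_of_pos hδ0] using hp.dist_le_mul (τ + δ) τ
    · simpa [Real.dist_eq, abs_of_pos hδ0] using hq.dist_le_mul (τ - δ) τ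
  rw [div_le_div_iff₀ (hq0 a) (hq0 b), ← Real.log_le_log_iff (mul_pos (hp0 a) (hq0 b))
    (mul_pos (hp0 b) (hq0 a)), Real.log_mul (hp0 a).ne' (hq0 b).ne',
    Real.log_mul (hp0 b).ne' (hq0 a).ne']
  linarith

theorem exists_forall_le_and_le {ι : Type*} [Nonempty ι] {l r : ι → ℝ}
    (h : ∀ i j, l i ≤ r j) : ∃ s, ∀ i, l i ≤ s ∧ s ≤ r i := by
  have hbdd : BddAbove (Set.range l) := ⟨r (Classical.arbitrary ι), by
    rintro _ ⟨i, rfl⟩; exact h i _⟩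
  exact ⟨⨆ i, l i, fun i => ⟨le_ciSup hbdd i, ciSup_le fun j => h j i⟩⟩

theorem LinearIndependent.add_smul_sub_ne_zero {R M : Type*} [CommRing R] [Nontrivial R]
    [AddCommGroup M] [Module R M] {y w : M} (h : LinearIndependent R ![y, w]) (t : R) :
    w + t • (y - w) ≠ 0 := fun hz => by
  obtain ⟨ht, ht'⟩ := LinearIndependent.pair_iff.1 h t (1 - t) (by rw [← hz]; module)
  exact one_ne_zero (by rw [ht, sub_zero] at ht'; exact ht')

namespace IsGauge

variable {X : Type*} [AddCommGroup X] [Module ℝ X] {γ : X → ℝ}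

theorem nonneg (hγ : IsGauge γ) (x : X) : 0 ≤ γ x := hγ.1 x

theorem map_zero (hγ : IsGauge γ) : γ 0 = 0 := (hγ.2.1 0).2 rfl

theorem pos (hγ : IsGauge γ) {x : X} (hx : x ≠ 0) : 0 < γ x :=
  (hγ.nonneg x).lt_of_ne' fun h => hx ((hγ.2.1 x).1 h)

theorem map_add_le (hγ : IsGauge γ) (x y : X) : γ (x + y) ≤ γ x + γ y := hγ.2.2.2 x y

theorem map_smul_of_nonneg (hγ : IsGauge γ) {c : ℝ} (hc : 0 ≤ c) (x : X) :
    γ (c • x) = c * γ x := by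
  rcases hc.eq_or_lt with rfl | hc
  · simp [hγ.map_zero]
  · exact hγ.2.2.1 c x hc

theorem map_smul_of_nonpos (hγ : IsGauge γ) {c : ℝ} (hc : c ≤ 0) (x : X) :
    γ (c • x) = -c * γ (-x) := by
  rw [← hγ.map_smul_of_nonneg (neg_nonneg.2 hc), smul_neg, neg_smul, neg_neg]

theorem map_smul_le (hγ : IsGauge γ) (c : ℝ) (x : X) :
    γ (c • x) ≤ max (γ x) (γ (-x)) * |c| := by
  rcases le_total 0 c with hc | hc
  · rw [hγ.map_smul_of_nonneg hc, abs_of_nonneg hc, mul_comm]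
    exact mul_le_mul_of_nonneg_right (le_max_left _ _) hc
  · rw [hγ.map_smul_of_nonpos hc, abs_of_nonpos hc, mul_comm]
    exact mul_le_mul_of_nonneg_right (le_max_right _ _) (neg_nonneg.2 hc)

theorem lipschitzWith_line (hγ : IsGauge γ) (w d : X) :
    LipschitzWith (max (γ d) (γ (-d))).toNNReal fun t : ℝ => γ (w + t • d) :=
  LipschitzWith.of_le_add_mul' _ fun t u =>
    calc γ (w + t • d) = γ ((w + u • d) + (t - u) • d) := by rw [sub_smul]; abel_nf
      _ ≤ γ (w + u • d) + max (γ d) (γ (-d)) * |t - u| :=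
        (hγ.map_add_le _ _).trans (add_le_add le_rfl (hγ.map_smul_le _ _))
      _ = _ := by rw [Real.dist_eq]

theorem mul_le_of_coproximinal_line (hγ : IsGauge γ) {p v : X} (hv : v ≠ 0)
    (hK : Coproximinal γ {q | ∃ t : ℝ, q = p + t • v}) (z : X) :
    γ v * γ (-v) ≤ γ (-v) * γ z + γ v * γ (z - v) := by
  have ha := hγ.pos hv
  have hb := hγ.pos (neg_ne_zero.2 hv)
  obtain ⟨_, ⟨s, rfl⟩, hs⟩ := hK (p + z)
  have h0 : γ (s • v) ≤ γ z := by simpa using hs p ⟨0, by simp⟩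
  have h1 : γ ((s - 1) • v) ≤ γ (z - v) := by
    simpa [sub_smul, sub_add_eq_sub_sub] using hs (p + v) ⟨1, by simp⟩
  have hz := hγ.nonneg z
  have hzv := hγ.nonneg (z - v)
  rcases le_total 0 s with hs0 | hs0 <;> rcases le_total s 1 with hs1 | hs1
  · rw [hγ.map_smul_of_nonneg hs0] at h0
    rw [hγ.map_smul_of_nonpos (by linarith)] at h1
    nlinarith
  · rw [hγ.map_smul_of_nonneg hs0] at h0
    nlinarith [mul_le_mul_of_nonneg_left h0 hb.le, mul_nonneg (sub_nonneg.2 hs1) (mul_pos ha hb).le,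
      mul_nonneg ha.le hzv]
  · rw [hγ.map_smul_of_nonpos (by linarith)] at h1
    nlinarith [mul_le_mul_of_nonneg_left h1 ha.le, mul_nonneg (neg_nonneg.2 hs0) (mul_pos ha hb).le,
      mul_nonneg hb.le hz]
  · linarith

theorem sub_le_div_add_div_of_mul_le (hγ : IsGauge γ) {v : X} (hv : v ≠ 0)
    (h : ∀ z, γ v * γ (-v) ≤ γ (-v) * γ z + γ v * γ (z - v)) (y : X) (t u : ℝ) :
    t - u ≤ γ (y - t • v) / γ (-v) + γ (y - u • v) / γ v := by
  have ha := hγ.pos hv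
  have hb := hγ.pos (neg_ne_zero.2 hv)
  rcases le_or_gt t u with htu | htu
  · have := div_nonneg (hγ.nonneg (y - t • v)) hb.le
    have := div_nonneg (hγ.nonneg (y - u • v)) ha.le
    linarith
  have hτ : 0 < t - u := sub_pos.2 htu
  have key := h ((t - u)⁻¹ • (y - u • v))
  have e : (t - u)⁻¹ • (y - u • v) - v = (t - u)⁻¹ • (y - t • v) := by
    match_scalars <;> field_simp
    ring
  rw [e, hγ.map_smul_of_nonneg (inv_pos.2 hτ).le, hγ.map_smul_of_nonneg (inv_pos.2 hτ).le] at key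
  rw [div_add_div _ _ hb.ne' ha.ne', le_div_iff₀ (mul_pos hb ha)]
  calc (t - u) * (γ (-v) * γ v)
      ≤ (t - u) * (γ (-v) * ((t - u)⁻¹ * γ (y - u • v)) + γ v * ((t - u)⁻¹ * γ (y - t • v))) := by
        rw [mul_comm (γ (-v))]
        exact mul_le_mul_of_nonneg_left key hτ.le
    _ = γ (y - t • v) * γ v + γ (-v) * γ (y - u • v) := by field_simp; ring

theorem coproximinal_line_of_mul_le (hγ : IsGauge γ) (p : X) {v : X} (hv : v ≠ 0)
    (h : ∀ z, γ v * γ (-v) ≤ γ (-v) * γ z + γ v * γ (z - v)) :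
    Coproximinal γ {q | ∃ t : ℝ, q = p + t • v} := by
  intro y
  set g : ℝ → ℝ := fun t => γ (y - p - t • v)
  obtain ⟨s, hs⟩ := exists_forall_le_and_le (l := fun t => t - g t / γ (-v))
    (r := fun t => t + g t / γ v) fun t u => by
      have := hγ.sub_le_div_add_div_of_mul_le hv h (y - p) t u
      linarith
  refine ⟨p + s • v, ⟨s, rfl⟩, ?_⟩
  rintro _ ⟨t, rfl⟩
  rw [show p + s • v - (p + t • v) = (s - t) • v by rw [sub_smul]; abel,
    show y - (p + t • v) = y - p - t • v by abel]
  rcases le_total t s with hts | hts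
  · rw [hγ.map_smul_of_nonneg (sub_nonneg.2 hts), ← le_div_iff₀ (hγ.pos hv)]
    linarith [(hs t).2]
  · rw [hγ.map_smul_of_nonpos (sub_nonpos.2 hts), ← le_div_iff₀ (hγ.pos (neg_ne_zero.2 hv))]
    linarith [(hs t).1]

theorem two_mul_mul_le (hγ : IsGauge γ)
    (h : ∀ v, v ≠ 0 → ∀ z, γ v * γ (-v) ≤ γ (-v) * γ z + γ v * γ (z - v))
    {m : X} (hm : m ≠ 0) (u : X) :
    2 * (γ m * γ (-m)) ≤ γ (-m) * γ (m + u) + γ m * γ (-(m - u)) := by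
  have h2 := h ((2 : ℝ) • m) (smul_ne_zero two_ne_zero hm) (m + u)
  rw [← smul_neg, hγ.map_smul_of_nonneg zero_le_two, hγ.map_smul_of_nonneg zero_le_two,
    show m + u - (2 : ℝ) • m = -(m - u) by module] at h2
  linarith

theorem mul_map_neg_eq_of_add_smul_ne_zero (hγ : IsGauge γ)
    (h : ∀ v, v ≠ 0 → ∀ z, γ v * γ (-v) ≤ γ (-v) * γ z + γ v * γ (z - v))
    {w d : X} (hwd : ∀ t : ℝ, w + t • d ≠ 0) (t : ℝ) :
    γ (w + t • d) * γ (-w) = γ w * γ (-(w + t • d)) := by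
  set p : ℝ → ℝ := fun t => γ (w + t • d)
  set q : ℝ → ℝ := fun t => γ (-(w + t • d))
  have hp0 : ∀ t, 0 < p t := fun t => hγ.pos (hwd t)
  have hq0 : ∀ t, 0 < q t := fun t => hγ.pos (neg_ne_zero.2 (hwd t))
  have hpL := hγ.lipschitzWith_line w d
  have hqL : LipschitzWith (max (γ (-d)) (γ (-(-d)))).toNNReal q := by
    simpa only [q, neg_add, ← smul_neg] using hγ.lipschitzWith_line (-w) (-d)
  have key : ∀ t δ, 2 * (p t * q t) ≤ q t * p (t + δ) + p t * q (t - δ) := fun t δ => by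
    have := hγ.two_mul_mul_le h (hwd t) (δ • d)
    rwa [show w + t • d + δ • d = w + (t + δ) • d by module,
      show w + t • d - δ • d = w + (t - δ) • d by module] at this
  have key' : ∀ t δ, 2 * (q t * p t) ≤ p t * q (t + δ) + q t * p (t - δ) := fun t δ => by
    have := key t (-δ)
    rw [sub_neg_eq_add, ← sub_eq_add_neg] at this
    linarith
  have hpq := monotone_div_of_two_mul_le hpL hqL hp0 hq0 key
  have hqp := monotone_div_of_two_mul_le hqL hpL hq0 hp0 key'
  have hcross : ∀ s t, s ≤ t → p t * q s = p s * q t := fun s t hst => by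
    have h1 := hpq hst
    have h2 := hqp hst
    simp only at h1 h2
    rw [div_le_div_iff₀ (hq0 s) (hq0 t)] at h1
    rw [div_le_div_iff₀ (hp0 s) (hp0 t)] at h2
    linarith
  have hw : p 0 = γ w := by simp [p]
  have hw' : q 0 = γ (-w) := by simp [q]
  rw [← hw, ← hw']
  rcases le_total 0 t with ht | ht
  · linarith [hcross 0 t ht]
  · linarith [hcross t 0 ht]

end IsGauge

theorem stmt_0 {X : Type*} [AddCommGroup X] [Module ℝ X]
    (hdim : Module.finrank ℝ X = 2) (γ : X → ℝ) (hγ : IsGauge γ) :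
    (∀ x : X, γ (-x) = γ x) ↔
      (∀ p v : X, v ≠ 0 → Coproximinal γ {q : X | ∃ t : ℝ, q = p + t • v}) := by
  constructor
  · intro hsym p v hv
    refine hγ.coproximinal_line_of_mul_le p hv fun z => ?_
    have htri := hγ.map_add_le z (-(z - v))
    rw [hsym, show z + -(z - v) = v by abel] at htri
    rw [hsym]
    nlinarith [hγ.nonneg v]
  · intro hcop x
    have h := fun v hv => hγ.mul_le_of_coproximinal_line hv (hcop 0 v hv)
    rcases eq_or_ne x 0 with rfl | hx
    · rw [neg_zero]
    obtain ⟨w, hxw⟩ := exists_linearIndependent_pair_of_one_lt_finrank (R := ℝ) (by omega) hx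
    have h1 := hγ.mul_map_neg_eq_of_add_smul_ne_zero h hxw.add_smul_sub_ne_zero 1
    have h2 := hγ.mul_map_neg_eq_of_add_smul_ne_zero h
      (LinearIndependent.pair_neg_left_iff.2 hxw).add_smul_sub_ne_zero 1
    simp only [one_smul, add_sub_cancel, neg_neg] at h1 h2
    have hw : w ≠ 0 := by simpa using hxw.ne_zero 1
    have hsum : 0 < γ w + γ (-w) := add_pos (hγ.pos hw) (hγ.pos (neg_ne_zero.2 hw))
    have hprod : (γ (-x) - γ x) * (γ w + γ (-w)) = 0 := by linear_combination h2 - h1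
    exact sub_eq_zero.1 ((mul_eq_zero.1 hprod).resolve_right hsum.ne')
end

section
/- Let X = ℓ¹ be the space of absolutely summable real sequences, equipped with γ(ξ₁, ξ₂, …) = max{ sup_{i ≥ 1} |ξ_i|, Σ_{i=1}^∞ ξ_i }. Then γ is a gauge on ℓ¹, and the sequence (x_n)_{n ≥ 1} ⊂ ℓ¹ defined by x_n = (1/n, …, 1/n, 0, 0, …) (with n entries equal to 1/n) satisfies γ(x_n) = 1 for every n and lim_{n → ∞} γ(−x_n) = 0. -/
open Filter Topology

/-- The gauge `γ(ξ₁,ξ₂,…) = max { supᵢ |ξᵢ| , Σᵢ ξᵢ }` on `ℓ¹`. -/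
noncomputable def gammaL1 (f : lp (fun _ : ℕ => ℝ) 1) : ℝ :=
  max (⨆ i : ℕ, |f i|) (∑' i : ℕ, f i)

/-!
Both ingredients of `γ` are well behaved on `ℓ¹`: `f ↦ supᵢ |fᵢ|` is a norm and
`f ↦ Σᵢ fᵢ` a continuous linear functional, and the maximum of a norm and a linear
functional is a gauge. The averaging vectors `xₙ` have sup norm `1/n` and sum `1`, so
`γ(xₙ) = max(1/n, 1) = 1`, while `γ(-xₙ) = max(1/n, -1) = 1/n → 0`.
-/

section lpReal

variable {ι : Type*} {p : ENNReal}

theorem Memℓp.of_finite_support {E : ι → Type*} [∀ i, NormedAddCommGroup (E i)]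
    {f : ∀ i, E i} (hf : {i | f i ≠ 0}.Finite) : Memℓp f p :=
  (memℓp_zero_iff.2 hf).of_exponent_ge zero_le

theorem lp.bddAbove_range_abs (hp : p ≠ 0) (f : lp (fun _ : ι => ℝ) p) :
    BddAbove (Set.range fun i => |f i|) :=
  ⟨‖f‖, by rintro _ ⟨i, rfl⟩; exact lp.norm_apply_le_norm hp f i⟩

theorem lp.abs_apply_le_iSup_abs (hp : p ≠ 0) (f : lp (fun _ : ι => ℝ) p) (i : ι) :
    |f i| ≤ ⨆ j, |f j| :=
  le_ciSup (lp.bddAbove_range_abs hp f) i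

end lpReal

section gammaL1

variable (f g : lp (fun _ : ℕ => ℝ) 1)

theorem gammaL1_nonneg : 0 ≤ gammaL1 f :=
  le_max_of_le_left (Real.iSup_nonneg fun _ => abs_nonneg _)

theorem gammaL1_eq_zero_iff : gammaL1 f = 0 ↔ f = 0 := by
  constructor
  · intro h
    ext i
    have hsup : (⨆ j, |f j|) ≤ 0 := h ▸ le_max_left _ _
    exact abs_nonpos_iff.1 ((lp.abs_apply_le_iSup_abs one_ne_zero f i).trans hsup)
  · rintro rfl
    simp [gammaL1]

theorem gammaL1_smul {l : ℝ} (hl : 0 ≤ l) : gammaL1 (l • f) = l * gammaL1 f := by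
  have hsup : (⨆ i, |(l • f) i|) = l * ⨆ i, |f i| := by
    simp [Real.mul_iSup_of_nonneg hl, abs_mul, abs_of_nonneg hl]
  have hsum : ∑' i, (l • f) i = l * ∑' i, f i := by
    simp only [lp.coeFn_smul, Pi.smul_apply, smul_eq_mul]
    exact tsum_mul_left
  rw [gammaL1, gammaL1, hsup, hsum, mul_max_of_nonneg _ _ hl]

theorem gammaL1_add_le : gammaL1 (f + g) ≤ gammaL1 f + gammaL1 g := by
  apply max_le
  · refine (ciSup_le fun i => ?_).trans (add_le_add (le_max_left _ _) (le_max_left _ _))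
    rw [lp.coeFn_add, Pi.add_apply]
    exact (abs_add_le _ _).trans (add_le_add (lp.abs_apply_le_iSup_abs one_ne_zero f i)
      (lp.abs_apply_le_iSup_abs one_ne_zero g i))
  · have hsum : ∑' i, (f + g) i = ∑' i, f i + ∑' i, g i := by
      simpa using (lp.tsumCLM ℝ ℕ ℝ).map_add f g
    rw [hsum]
    exact add_le_add (le_max_right _ _) (le_max_right _ _)

theorem isGauge_gammaL1 : IsGauge gammaL1 :=
  ⟨gammaL1_nonneg, gammaL1_eq_zero_iff, fun _ f hl => gammaL1_smul f hl.le, gammaL1_add_le⟩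

theorem gammaL1_neg_of_tsum_nonneg (hf : 0 ≤ ∑' i, f i) : gammaL1 (-f) = ⨆ i, |f i| := by
  simp only [gammaL1, lp.coeFn_neg, Pi.neg_apply, abs_neg, tsum_neg]
  exact max_eq_left ((neg_nonpos.2 hf).trans (Real.iSup_nonneg fun _ => abs_nonneg _))

end gammaL1

section avgVector

noncomputable def avgVector (n : ℕ) : lp (fun _ : ℕ => ℝ) 1 :=
  ⟨fun i => if i < n then (1 : ℝ) / n else 0,
    Memℓp.of_finite_support <| (Set.finite_Iio n).subset fun i hi => by
      by_contra h
      exact hi (if_neg h)⟩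

variable (n : ℕ)

theorem avgVector_apply (i : ℕ) : avgVector n i = if i < n then (1 : ℝ) / n else 0 := rfl

theorem avgVector_apply_nonneg (i : ℕ) : 0 ≤ avgVector n i := by
  rw [avgVector_apply]
  split_ifs <;> positivity

-- For `n = 0` both sides vanish since `1 / 0 = 0`.
theorem iSup_abs_avgVector : ⨆ i, |avgVector n i| = 1 / n := by
  refine le_antisymm (ciSup_le fun i => ?_) ?_
  · rw [avgVector_apply]
    split_ifs <;> simp
  · refine le_trans (le_of_eq ?_) (lp.abs_apply_le_iSup_abs one_ne_zero _ 0)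
    rcases n with _ | n
    · simp [avgVector_apply]
    · simp [avgVector_apply, abs_of_pos (n.cast_add_one_pos (α := ℝ))]

theorem tsum_avgVector {n : ℕ} (hn : n ≠ 0) : ∑' i, avgVector n i = 1 := by
  change ∑' i, (if i < n then (1 : ℝ) / n else 0) = 1
  rw [tsum_eq_sum (s := Finset.range n) fun i hi => if_neg (Finset.mem_range.not.1 hi),
    Finset.sum_congr rfl fun i hi => if_pos (Finset.mem_range.1 hi)]
  simp [hn]

theorem gammaL1_avgVector {n : ℕ} (hn : n ≠ 0) : gammaL1 (avgVector n) = 1 := by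
  rw [gammaL1, iSup_abs_avgVector, tsum_avgVector hn, max_eq_right]
  exact div_le_one_of_le₀ (Nat.one_le_cast.2 (Nat.one_le_iff_ne_zero.2 hn)) n.cast_nonneg

theorem gammaL1_neg_avgVector : gammaL1 (-avgVector n) = 1 / n := by
  rw [gammaL1_neg_of_tsum_nonneg _ (tsum_nonneg (avgVector_apply_nonneg n)),
    iSup_abs_avgVector]

end avgVector

theorem stmt_6 :
    IsGauge gammaL1 ∧
    ∃ x : ℕ → lp (fun _ : ℕ => ℝ) 1,
      (∀ n i : ℕ, (x n) i = if i < n then (1 : ℝ) / n else 0) ∧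
      (∀ n : ℕ, 1 ≤ n → gammaL1 (x n) = 1) ∧
      Tendsto (fun n => gammaL1 (-(x n))) atTop (𝓝 0) := by
  refine ⟨isGauge_gammaL1, avgVector, avgVector_apply, fun n hn => ?_, ?_⟩
  · exact gammaL1_avgVector (Nat.one_le_iff_ne_zero.1 hn)
  · simpa only [gammaL1_neg_avgVector] using tendsto_one_div_atTop_nhds_zero_nat
end

section
/- Let (X, ⟨·,·⟩) be a real inner product space with induced norm ‖·‖, let K be a linear subspace of X, let y₀ ∈ X and z₀ ∈ K. Then z₀ is a best coapproximation of y₀ in K (i.e., ‖z₀ − z‖ ≤ ‖y₀ − z‖ for all z ∈ K) if and only if y₀ − z₀ is orthogonal to K, i.e., ⟨y₀ − z₀, z⟩ = 0 for all z ∈ K. -/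
/-! Writing `v = y₀ - z₀` and `u = z - z₀`, the coapproximation inequality reads `‖u‖ ≤ ‖v - u‖`
for all `u ∈ K`. Orthogonality gives it by Pythagoras. Conversely, testing it on the line
`u = t • w` and expanding the square leaves `2 t ⟪v, w⟫ ≤ ‖v‖²` for every real `t`, which forces
`⟪v, w⟫ = 0`. -/

open scoped RealInnerProductSpace

lemma eq_zero_of_forall_mul_le {a b : ℝ} (h : ∀ t, t * a ≤ b) : a = 0 := by
  by_contra ha
  have := h ((b + 1) / a)
  rw [div_mul_cancel₀ _ ha] at this
  linarith

section InnerProductSpace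

variable {X : Type*} [NormedAddCommGroup X] [InnerProductSpace ℝ X]

lemma real_inner_eq_zero_of_forall_norm_smul_le_norm_sub_smul {v w : X}
    (h : ∀ t : ℝ, ‖t • w‖ ≤ ‖v - t • w‖) : ⟪v, w⟫ = 0 := by
  have hline : ∀ t : ℝ, t * (2 * ⟪v, w⟫) ≤ ‖v‖ ^ 2 := fun t => by
    have hsq := pow_le_pow_left₀ (norm_nonneg _) (h t) 2
    rw [norm_sub_sq_real, real_inner_smul_right] at hsq
    linarith
  simpa using eq_zero_of_forall_mul_le hline

lemma norm_le_norm_sub_of_real_inner_eq_zero {v u : X} (h : ⟪v, u⟫ = 0) : ‖u‖ ≤ ‖v - u‖ :=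
  (pow_le_pow_iff_left₀ (norm_nonneg _) (norm_nonneg _) two_ne_zero).1 <| by
    rw [sq, sq, norm_sub_sq_eq_norm_sq_add_norm_sq_real h]
    exact le_add_of_nonneg_left (mul_self_nonneg _)

theorem Submodule.forall_norm_le_norm_sub_iff (K : Submodule ℝ X) (v : X) :
    (∀ u ∈ K, ‖u‖ ≤ ‖v - u‖) ↔ ∀ u ∈ K, ⟪v, u⟫ = 0 :=
  ⟨fun h _ hw => real_inner_eq_zero_of_forall_norm_smul_le_norm_sub_smul
      fun t => h _ (K.smul_mem t hw),
    fun h u hu => norm_le_norm_sub_of_real_inner_eq_zero (h u hu)⟩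

end InnerProductSpace

theorem stmt_16 {X : Type*} [NormedAddCommGroup X] [InnerProductSpace ℝ X]
    (K : Submodule ℝ X) (y₀ : X) (z₀ : X) (hz₀ : z₀ ∈ K) :
    (∀ z ∈ K, ‖z₀ - z‖ ≤ ‖y₀ - z‖) ↔ (∀ z ∈ K, inner ℝ (y₀ - z₀) z = (0 : ℝ)) := by
  rw [← K.forall_norm_le_norm_sub_iff]
  constructor
  · intro h u hu
    simpa only [sub_add_cancel_left, norm_neg, sub_sub] using h (z₀ + u) (K.add_mem hz₀ hu)
  · intro h z hz
    simpa only [norm_sub_rev z₀, sub_sub_sub_cancel_right] using h (z - z₀) (K.sub_mem hz hz₀)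
end

section
/- Let (X, ⟨·,·⟩) be a real inner product space with induced norm ‖·‖. If every closed 1-codimensional linear subspace of X is coproximinal, then the Riesz representation theorem holds in X: for every continuous linear functional f : X → ℝ there exists x₀ ∈ X such that f(x) = ⟨x, x₀⟩ for all x ∈ X. -/
/-- A linear subspace is `1`-codimensional. -/
def CodimOne {X : Type*} [AddCommGroup X] [Module ℝ X] (K : Submodule ℝ X) : Prop :=
  ∃ v : X, v ∉ K ∧ ∀ x : X, ∃ k ∈ K, ∃ α : ℝ, x = k + α • v

/-- `K` is coproximinal in a normed space: every point has a best coapproximation in `K`. -/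
def CoproximinalNorm {X : Type*} [NormedAddCommGroup X] (K : Set X) : Prop :=
  ∀ y : X, ∃ x ∈ K, ∀ z ∈ K, ‖x - z‖ ≤ ‖y - z‖

/-!
Take `f ≠ 0` and `v` with `f v ≠ 0`. A best coapproximation `x` of `v` in `K = ker f` satisfies
`‖t • u‖ ≤ ‖(v - x) + t • u‖` for all `u ∈ K` and `t : ℝ`; expanding the squares, a linear
function of `t` stays nonnegative, so `w = v - x` is orthogonal to `K`. Since `K` has
codimension one, `f` is then a multiple of `⟪·, w⟫`.
-/

open scoped RealInnerProductSpace

lemma eq_zero_of_forall_nonneg_add_mul {a b : ℝ} (h : ∀ t : ℝ, 0 ≤ a + t * b) : b = 0 := by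
  by_contra hb
  have := h (-(a + 1) / b)
  rw [div_mul_cancel₀ _ hb] at this
  linarith

section

variable {X : Type*} [NormedAddCommGroup X] [InnerProductSpace ℝ X]

lemma real_inner_eq_zero_of_forall_norm_smul_le {w u : X}
    (h : ∀ t : ℝ, ‖t • u‖ ≤ ‖w + t • u‖) : ⟪w, u⟫ = 0 := by
  have hlin : ∀ t : ℝ, 0 ≤ ‖w‖ ^ 2 + t * (2 * ⟪w, u⟫) := fun t => by
    have hsq := pow_le_pow_left₀ (norm_nonneg _) (h t) 2
    rw [norm_add_sq_real, real_inner_smul_right] at hsq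
    linarith
  simpa using eq_zero_of_forall_nonneg_add_mul hlin

lemma sub_mem_orthogonal_of_forall_norm_sub_le {K : Submodule ℝ X} {x y : X} (hx : x ∈ K)
    (hxy : ∀ z ∈ K, ‖x - z‖ ≤ ‖y - z‖) : y - x ∈ Kᗮ := by
  refine (Submodule.mem_orthogonal' K _).2 fun u hu => ?_
  refine real_inner_eq_zero_of_forall_norm_smul_le fun t => ?_
  have := hxy (x - t • u) (K.sub_mem hx (K.smul_mem t hu))
  rwa [sub_sub_cancel, sub_sub_eq_add_sub, add_sub_right_comm] at this

lemma codimOne_ker {f : X →ₗ[ℝ] ℝ} {v : X} (hv : f v ≠ 0) : CodimOne (LinearMap.ker f) := by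
  refine ⟨v, hv, fun x => ⟨x - (f x / f v) • v, ?_, f x / f v, (sub_add_cancel _ _).symm⟩⟩
  simp [LinearMap.mem_ker, hv]

lemma LinearMap.apply_eq_inner_of_mem_orthogonal_ker (f : X →ₗ[ℝ] ℝ) {w : X}
    (hw : w ∈ (LinearMap.ker f)ᗮ) (hfw : f w ≠ 0) (x : X) :
    f x = ⟪x, (f w / ‖w‖ ^ 2) • w⟫ := by
  have hw0 : w ≠ 0 := by rintro rfl; simp at hfw
  have hker : x - (f x / f w) • w ∈ LinearMap.ker f := by simp [LinearMap.mem_ker, hfw]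
  have horth := Submodule.inner_right_of_mem_orthogonal hker hw
  rw [inner_sub_left, real_inner_smul_left, real_inner_self_eq_norm_sq, sub_eq_zero] at horth
  rw [real_inner_smul_right, horth]
  field_simp

end

theorem stmt_17 {X : Type*} [NormedAddCommGroup X] [InnerProductSpace ℝ X]
    (h : ∀ K : Submodule ℝ X, IsClosed (K : Set X) → CodimOne K →
      CoproximinalNorm (K : Set X)) :
    ∀ f : X →L[ℝ] ℝ, ∃ x₀ : X, ∀ x : X, f x = inner ℝ x x₀ := by
  intro f
  by_cases hf : f = 0
  · exact ⟨0, fun x => by simp [hf]⟩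
  obtain ⟨v, hv⟩ := DFunLike.ne_iff.1 hf
  obtain ⟨x, hx, hxv⟩ := h _ f.isClosed_ker (codimOne_ker (f := (f : X →ₗ[ℝ] ℝ)) hv) v
  have hfx : f x = 0 := hx
  have hfw : f (v - x) ≠ 0 := by rwa [map_sub, hfx, sub_zero]
  exact ⟨_, (f : X →ₗ[ℝ] ℝ).apply_eq_inner_of_mem_orthogonal_ker
    (sub_mem_orthogonal_of_forall_norm_sub_le hx hxv) hfw⟩
end

section
/- Let (X, ⟨·,·⟩) be a real inner product space with induced norm ‖·‖ in which the Riesz representation theorem holds, i.e., for every continuous linear functional f : X → ℝ there exists x₀ ∈ X with f(x) = ⟨x, x₀⟩ for all x ∈ X. Then X is complete with respect to ‖·‖. -/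
/-!
Embed `X` isometrically into its completion `X̂`. For `y ∈ X̂`, the functional `x ↦ ⟪y, x⟫` is
continuous on `X`, so it is represented by some `x₀ ∈ X`; then `y` and `x₀` have the same inner
products with the dense image of `X`, hence coincide. Thus `X` is isometric to `X̂`.
-/

open UniformSpace

theorem LinearIsometry.surjective_of_denseRange_of_forall_exists_inner_eq
    {X E : Type*} [NormedAddCommGroup X] [InnerProductSpace ℝ X]
    [NormedAddCommGroup E] [InnerProductSpace ℝ E] (ι : X →ₗᵢ[ℝ] E) (hι : DenseRange ι)
    (hRiesz : ∀ f : X →L[ℝ] ℝ, ∃ x₀ : X, ∀ x : X, f x = inner ℝ x x₀) :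
    Function.Surjective ι := by
  intro y
  obtain ⟨x₀, hx₀⟩ := hRiesz ((innerSL ℝ y).comp ι.toContinuousLinearMap)
  refine ⟨x₀, hι.eq_of_inner_right ℝ fun x => ?_⟩
  simpa [ι.inner_map_map, real_inner_comm] using (hx₀ x).symm

theorem stmt_19 {X : Type*} [NormedAddCommGroup X] [InnerProductSpace ℝ X]
    (hRiesz : ∀ f : X →L[ℝ] ℝ, ∃ x₀ : X, ∀ x : X, f x = inner ℝ x x₀) :
    CompleteSpace X :=
  (LinearIsometryEquiv.ofSurjective Completion.toComplₗᵢ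
    (Completion.toComplₗᵢ.surjective_of_denseRange_of_forall_exists_inner_eq
      Completion.denseRange_coe hRiesz)).toIsometryEquiv.completeSpace
end
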